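/- arXiv:2505.20284 — 2 statements merged into one kernel-verified Lean document; each statement's English description precedes it below -/
import Mathlib

section
/- Let Φ be a t-uniform purified code state, T ⊆ {1,…,n} with |T| = t, and U a T-standard-form unitary for Φ. Identify ℂ^{Q^k} ⊗ (ℂ^Q)^{⊗(n−t−1)} with ℂ^{Q^{t−1}} and define, for each s' ∈ {0,…,Q−1}^{t−1}, the vector ω_{s'} := Q^{−1/2} Σ_{r ∈ {0,…,Q−1}} U(e_{s'} ⊗ e_r) ⊗ e_r ∈ (ℂ^Q)^{⊗(t+1)}. Then {ω_{s'}} is an orthonormal family, and for every position p ∈ {1,…,t+1} and every Q×Q complex matrix γ there exists a scalar c(γ,p), independent of s' and s'', such that ⟨ω_{s'}, Γ ω_{s''}⟩ = c(γ,p)·δ_{s',s''}, where Γ acts as γ on the p-th qudit and as the identity on all other qudits. Consequently the span of {ω_{s'}} is a [[t+1, t−1]]_Q quantum code of distance 2, i.e., a quantum MDS code (Lemma 2.6). -/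
open scoped BigOperators

noncomputable section

/-- Combine an assignment on `A` with an assignment on the complement of `A`
into a full computational-basis string. -/
def mergeOn {n Q : ℕ} (A : Finset (Fin n)) (u : {i // i ∈ A} → Fin Q)
    (v : {i // i ∉ A} → Fin Q) : Fin n → Fin Q :=
  fun i => if h : i ∈ A then u ⟨i, h⟩ else v ⟨i, h⟩

/-- Reduced density matrix of a purified code state `Φ` on the qudits in `A`
(the reference register and the qudits outside `A` are traced out). -/
def rdm {Q k n : ℕ} (Φ : (Fin k → Fin Q) → (Fin n → Fin Q) → ℂ)
    (A : Finset (Fin n)) :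
    Matrix ({i // i ∈ A} → Fin Q) ({i // i ∈ A} → Fin Q) ℂ :=
  Matrix.of fun u v => ∑ s : Fin k → Fin Q, ∑ w : {i // i ∉ A} → Fin Q,
    Φ s (mergeOn A u w) * (starRingEnd ℂ) (Φ s (mergeOn A v w))

/-- `Φ` is `t`-uniform: every set of `t` qudits is maximally mixed. -/
def TUniform {Q k n : ℕ} (t : ℕ)
    (Φ : (Fin k → Fin Q) → (Fin n → Fin Q) → ℂ) : Prop :=
  ∀ A : Finset (Fin n), A.card = t →
    rdm Φ A = ((Q : ℂ) ^ t)⁻¹ •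
      (1 : Matrix ({i // i ∈ A} → Fin Q) ({i // i ∈ A} → Fin Q) ℂ)

/-- The codewords `ω_{s'} = Q^{-1/2} Σ_r U(e_{s'} ⊗ e_r) ⊗ e_r` of the induced
`[[t+1, t-1]]_Q` code, written in amplitude form.  Here `ℂ^{Q^k} ⊗ (ℂ^Q)^{⊗(n-t-1)}` is
identified with `ℂ^{Q^{t-1}}`, so `s' : Fin (t-1) → Fin Q`, and the column index
`(s', r)` of `U` is encoded by `Fin.snoc`. -/
def omegaVec {Q t : ℕ} (ht : 1 < t) (U : Matrix (Fin t → Fin Q) (Fin t → Fin Q) ℂ)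
    (s' : Fin (t - 1) → Fin Q) : (Fin (t + 1) → Fin Q) → ℂ :=
  fun v => (Real.sqrt (Q : ℝ) : ℂ)⁻¹ *
    U (fun i => v i.castSucc)
      (fun i => Fin.snoc (α := fun _ => Fin Q) s' (v (Fin.last t)) (Fin.cast (by omega : t = t - 1 + 1) i))

/-!
Column orthonormality of `U` gives the orthonormality of the `ω`'s and the Knill–Laflamme
condition on the last qudit, where both the code index and the acted-on digit are column digits
of `U`. For the `q`-th qudit, exchange the `q`-th row digit of `U` with its last column digit.
Up to the factor `Q^{-t/2}` and a relabelling of indices, the exchanged matrix is the matrix of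
amplitudes of `Φ` between the qudits of `A = (T ∖ {a}) ∪ {b}` (with `a` the `q`-th qudit of `T`
and `b` the last qudit outside `T`) and everything else, so `t`-uniformity on `A` makes it
unitary; in it the acted-on digit is a column digit, and the first argument applies again.
-/

open Function
open scoped Matrix

def exchangeQudits {ι κ α R : Type*} [DecidableEq ι] [DecidableEq κ]
    (M : Matrix (ι → α) (κ → α) R) (q : ι) (c : κ) : Matrix (ι → α) (κ → α) R :=
  Matrix.of fun w z => M (update w q (z c)) (update z c (w q))

theorem sum_conj_mul_sum_eq_ite_trace {ι κ σ α : Type*} [Fintype ι] [Fintype α]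
    [DecidableEq κ] [DecidableEq σ] [DecidableEq α]
    (W : Matrix ι κ ℂ) (hW : Wᴴ * W = 1) (enc : σ → α → κ)
    (henc : ∀ a b x m, enc a x = enc b m ↔ a = b ∧ x = m) (γ : Matrix α α ℂ) (a b : σ) :
    ∑ y, ∑ x, starRingEnd ℂ (W y (enc a x)) * ∑ m, γ x m * W y (enc b m)
      = if a = b then γ.trace else 0 := by
  have hcol : ∀ x m, ∑ y, starRingEnd ℂ (W y (enc a x)) * W y (enc b m)
      = if a = b ∧ x = m then 1 else 0 := by
    intro x m
    simpa [Matrix.mul_apply, Matrix.one_apply, henc] using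
      congrFun (congrFun hW (enc a x)) (enc b m)
  calc ∑ y, ∑ x, starRingEnd ℂ (W y (enc a x)) * ∑ m, γ x m * W y (enc b m)
      = ∑ x, ∑ m, γ x m * ∑ y, starRingEnd ℂ (W y (enc a x)) * W y (enc b m) := by
        simp only [Finset.mul_sum]
        rw [Finset.sum_comm]
        refine Finset.sum_congr rfl fun x _ => ?_
        rw [Finset.sum_comm]
        exact Finset.sum_congr rfl fun _ _ => Finset.sum_congr rfl fun _ _ => by ring
    _ = if a = b then γ.trace else 0 := by
        by_cases hab : a = b
        · subst hab; simp [hcol, Matrix.trace]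
        · simp [hcol, hab]

theorem sum_conj_mul_sum_update_eq_ite_trace {ι κ σ α β : Type*} [Fintype ι] [Fintype α]
    [Fintype β] [DecidableEq β] [DecidableEq κ] [DecidableEq σ] [DecidableEq α]
    (ψ : σ → (β → α) → ℂ) (p : β) (e : ι × α → β → α) (he : Bijective e)
    (he_apply : ∀ y x, e (y, x) p = x) (he_update : ∀ y x m, update (e (y, x)) p m = e (y, m))
    (W : Matrix ι κ ℂ) (hW : Wᴴ * W = 1) (enc : σ → α → κ)
    (henc : ∀ a b x m, enc a x = enc b m ↔ a = b ∧ x = m) (d : ℝ)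
    (hψ : ∀ a y x, ψ a (e (y, x)) = d * W y (enc a x)) (γ : Matrix α α ℂ) (a b : σ) :
    ∑ v, starRingEnd ℂ (ψ a v) * ∑ m, γ (v p) m * ψ b (update v p m)
      = if a = b then (d : ℂ) ^ 2 * γ.trace else 0 := by
  rw [← Fintype.sum_bijective e he _ _ fun _ => rfl, Fintype.sum_prod_type]
  simp only [he_apply, he_update, hψ, map_mul, Complex.conj_ofReal]
  have := sum_conj_mul_sum_eq_ite_trace W hW enc henc γ a b
  rw [← mul_ite_zero, ← this, Finset.mul_sum]
  refine Finset.sum_congr rfl fun y _ => ?_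
  rw [Finset.mul_sum]
  refine Finset.sum_congr rfl fun x _ => ?_
  simp only [Finset.mul_sum]
  exact Finset.sum_congr rfl fun _ _ => by ring

theorem eq_of_update_eq_update {ι α : Type*} [DecidableEq ι] {w w' : ι → α} {q : ι}
    {a a' : α} (h : update w q a = update w' q a') (hq : w q = w' q) : w = w' := by
  funext i
  by_cases hi : i = q
  · subst hi; exact hq
  · simpa [hi] using congrFun h i

theorem mergeOn_restrict {n Q : ℕ} (A : Finset (Fin n)) (f g : Fin n → Fin Q) :
    mergeOn A (fun i => f i) (fun i => g i) = fun i => if i ∈ A then f i else g i := by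
  funext i
  by_cases hi : i ∈ A <;> simp [mergeOn, hi]

theorem Finset.orderIsoOfFin_symm_orderEmbOfFin {α : Type*} [LinearOrder α] (s : Finset α)
    {m : ℕ} (h : s.card = m) (i : Fin m) :
    (s.orderIsoOfFin h).symm ⟨s.orderEmbOfFin h i, s.orderEmbOfFin_mem h i⟩ = i :=
  (s.orderIsoOfFin h).symm_apply_eq.mpr (Subtype.ext rfl)

theorem mul_conjTranspose_eq_one_of_rdm {Q k n : ℕ} {ι κ : Type*} [Fintype κ] [DecidableEq ι]
    (Φ : (Fin k → Fin Q) → (Fin n → Fin Q) → ℂ) (A : Finset (Fin n)) (c : ℝ)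
    (hc : c ≠ 0) (hA : rdm Φ A = (c : ℂ) ^ 2 • 1) (M : Matrix ι κ ℂ)
    (R : ι → {i // i ∈ A} → Fin Q) (hR : Injective R)
    (G : κ → (Fin k → Fin Q) × ({i // i ∉ A} → Fin Q)) (hG : Bijective G)
    (hM : ∀ w z, Φ (G z).1 (mergeOn A (R w) (G z).2) = c * M w z) : M * Mᴴ = 1 := by
  ext w w'
  have key : (c : ℂ) ^ 2 * (M * Mᴴ) w w' = (c : ℂ) ^ 2 * (1 : Matrix ι ι ℂ) w w' :=
    calc (c : ℂ) ^ 2 * (M * Mᴴ) w w'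
        = ∑ z, Φ (G z).1 (mergeOn A (R w) (G z).2) *
            starRingEnd ℂ (Φ (G z).1 (mergeOn A (R w') (G z).2)) := by
          simp only [hM, Matrix.mul_apply, Matrix.conjTranspose_apply, Finset.mul_sum, map_mul,
            Complex.conj_ofReal, RCLike.star_def]
          exact Finset.sum_congr rfl fun _ _ => by ring
      _ = rdm Φ A (R w) (R w') := by
          rw [Fintype.sum_bijective G hG _
            (fun p => Φ p.1 (mergeOn A (R w) p.2) *
              starRingEnd ℂ (Φ p.1 (mergeOn A (R w') p.2)))
            fun _ => rfl, Fintype.sum_prod_type]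
          rfl
      _ = (c : ℂ) ^ 2 * (1 : Matrix ι ι ℂ) w w' := by
          simp [hA, Matrix.one_apply, hR.eq_iff]
  exact mul_left_cancel₀ (by simpa using hc) key

def colIndex {Q t : ℕ} (ht : 0 < t) (s : Fin (t - 1) → Fin Q) (r : Fin Q) : Fin t → Fin Q :=
  fun i => Fin.snoc (α := fun _ => Fin Q) s r (Fin.cast (by omega : t = t - 1 + 1) i)

def lastDigit {t : ℕ} (ht : 0 < t) : Fin t := ⟨t - 1, by omega⟩

section colIndex

variable {Q t : ℕ} (ht : 0 < t)

theorem colIndex_lastDigit (s : Fin (t - 1) → Fin Q) (r : Fin Q) :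
    colIndex ht s r (lastDigit ht) = r := by
  have : Fin.cast (by omega : t = t - 1 + 1) (lastDigit ht) = Fin.last (t - 1) := rfl
  simp [colIndex, this]

theorem update_colIndex_lastDigit (s : Fin (t - 1) → Fin Q) (x r : Fin Q) :
    update (colIndex ht s x) (lastDigit ht) r = colIndex ht s r := by
  funext i
  by_cases hi : i = lastDigit ht
  · subst hi; simp [colIndex_lastDigit]
  · have : Fin.cast (by omega : t = t - 1 + 1) i ≠ Fin.last (t - 1) := by
      simpa [Fin.ext_iff, lastDigit] using hi
    obtain ⟨j, hj⟩ := Fin.exists_castSucc_eq.mpr this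
    simp [colIndex, hi, ← hj]

theorem colIndex_inj {s s' : Fin (t - 1) → Fin Q} {x x' : Fin Q} :
    colIndex ht s x = colIndex ht s' x' ↔ s = s' ∧ x = x' := by
  refine ⟨fun h => ⟨funext fun j => ?_, ?_⟩, fun h => h.1 ▸ h.2 ▸ rfl⟩
  · have hj : Fin.cast (by omega : t = t - 1 + 1) (Fin.cast (by omega) j.castSucc) = j.castSucc :=
      rfl
    simpa [colIndex, hj] using congrFun h (Fin.cast (by omega) j.castSucc)
  · simpa [colIndex_lastDigit] using congrFun h (lastDigit ht)

end colIndex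

theorem omegaVec_snoc {Q t : ℕ} (ht : 1 < t) (U : Matrix (Fin t → Fin Q) (Fin t → Fin Q) ℂ)
    (s : Fin (t - 1) → Fin Q) (u : Fin t → Fin Q) (r : Fin Q) :
    omegaVec ht U s (Fin.snoc u r) = (Real.sqrt Q : ℂ)⁻¹ * U u (colIndex (by omega) s r) := by
  simp only [omegaVec, Fin.snoc_castSucc, Fin.snoc_last]
  rfl

theorem omegaVec_knillLaflamme {Q t : ℕ} (ht : 1 < t)
    (U : Matrix (Fin t → Fin Q) (Fin t → Fin Q) ℂ)
    (hU : Uᴴ * U = 1)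
    (hUex : ∀ q, (exchangeQudits U q (lastDigit (by omega)))ᴴ *
      exchangeQudits U q (lastDigit (by omega)) = 1)
    (p : Fin (t + 1)) (γ : Matrix (Fin Q) (Fin Q) ℂ) (s' s'' : Fin (t - 1) → Fin Q) :
    ∑ v, starRingEnd ℂ (omegaVec ht U s' v) *
        ∑ m, γ (v p) m * omegaVec ht U s'' (update v p m)
      = if s' = s'' then (Q : ℂ)⁻¹ * γ.trace else 0 := by
  have ht0 : 0 < t := by omega
  have hd : (((Real.sqrt Q)⁻¹ : ℝ) : ℂ) ^ 2 = (Q : ℂ)⁻¹ := by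
    rw [← Complex.ofReal_pow, inv_pow, Real.sq_sqrt (Nat.cast_nonneg Q)]; simp
  rw [← hd]
  have hsnoc : Bijective fun yx : (Fin t → Fin Q) × Fin Q =>
      Fin.snoc (α := fun _ => Fin Q) yx.1 yx.2 :=
    ((Equiv.prodComm _ _).trans (Fin.snocEquiv fun _ => Fin Q)).bijective
  induction p using Fin.lastCases with
  | last =>
    refine sum_conj_mul_sum_update_eq_ite_trace _ _ _ hsnoc (fun _ _ => Fin.snoc_last _ _)
      (fun _ _ _ => Fin.update_snoc_last _ _ _) U hU (colIndex ht0)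
      (fun _ _ _ _ => colIndex_inj ht0) _ (fun s y x => ?_) γ s' s''
    simp [omegaVec_snoc]
  | cast q =>
    have hswap : Involutive
        fun yx : (Fin t → Fin Q) × Fin Q => (update yx.1 q yx.2, yx.1 q) := by
      rintro ⟨y, x⟩; simp
    refine sum_conj_mul_sum_update_eq_ite_trace _ _
      (fun yx => Fin.snoc (α := fun _ => Fin Q) (update yx.1 q yx.2) (yx.1 q))
      (hsnoc.comp hswap.bijective) (fun _ _ => by simp) (fun _ _ _ => by simp [← Fin.snoc_update])
      (exchangeQudits U q (lastDigit ht0)) (hUex q) (colIndex ht0)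
      (fun _ _ _ _ => colIndex_inj ht0) _ (fun s y x => ?_) γ s' s''
    rw [omegaVec_snoc]
    simp [exchangeQudits, colIndex_lastDigit, update_colIndex_lastDigit]

def lastOutside {n t : ℕ} (htn : t < n) : Fin (n - t) := ⟨n - t - 1, by omega⟩

def exchangedSet {n t : ℕ} (T : Finset (Fin n)) (hT : T.card = t) (hTc : Tᶜ.card = n - t)
    (htn : t < n) (q : Fin t) : Finset (Fin n) :=
  insert (Tᶜ.orderEmbOfFin hTc (lastOutside htn)) (T.erase (T.orderEmbOfFin hT q))

/- In the standard form the `j`-th qudit of `T` carries row digit `j` of `U` and the `j`-th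
qudit outside `T` carries column digit `k + j`. After exchanging, the `q`-th qudit of `T` carries
column digit `lastDigit` and the last qudit outside `T` carries row digit `q`. -/
def rowsToQudits {Q n t : ℕ} (T : Finset (Fin n)) (hT : T.card = t) (q : Fin t)
    (w : Fin t → Fin Q) : Fin n → Fin Q :=
  fun i => if h : i ∈ T then w ((T.orderIsoOfFin hT).symm ⟨i, h⟩) else w q

def colsToQudits {Q n t k : ℕ} (T : Finset (Fin n)) (hTc : Tᶜ.card = n - t)
    (hkt : k + (n - t) = t) (c : Fin t) (z : Fin t → Fin Q) : Fin n → Fin Q :=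
  fun i => if h : i ∈ Tᶜ
    then z (Fin.cast hkt (Fin.natAdd k ((Tᶜ.orderIsoOfFin hTc).symm ⟨i, h⟩)))
    else z c

def colsToRef {Q n t k : ℕ} (hkt : k + (n - t) = t) (z : Fin t → Fin Q) : Fin k → Fin Q :=
  fun j => z (Fin.cast hkt (Fin.castAdd (n - t) j))

def exchangedString {Q n t k : ℕ} (T : Finset (Fin n)) (hT : T.card = t)
    (hTc : Tᶜ.card = n - t) (hkt : k + (n - t) = t) (htn : t < n) (q : Fin t)
    (w z : Fin t → Fin Q) : Fin n → Fin Q :=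
  mergeOn (exchangedSet T hT hTc htn q) (fun i => rowsToQudits T hT q w i)
    (fun i => colsToQudits T hTc hkt (lastDigit q.pos) z i)

section StandardForm

variable {Q t n k : ℕ} (T : Finset (Fin n)) (hT : T.card = t) (hTc : Tᶜ.card = n - t)
  (hkt : k + (n - t) = t) (q : Fin t)

theorem orderEmbOfFin_mem_exchangedSet (htn : t < n) (j : Fin t) :
    T.orderEmbOfFin hT j ∈ exchangedSet T hT hTc htn q ↔ j ≠ q := by
  have hb : Tᶜ.orderEmbOfFin hTc (lastOutside htn) ∉ T :=
    Finset.mem_compl.mp (Finset.orderEmbOfFin_mem _ _ _)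
  simp only [exchangedSet, Finset.mem_insert, Finset.mem_erase, Finset.orderEmbOfFin_mem,
    and_true, (T.orderEmbOfFin hT).injective.ne_iff]
  exact or_iff_right fun h => hb (h ▸ Finset.orderEmbOfFin_mem _ _ _)

theorem compl_orderEmbOfFin_mem_exchangedSet (htn : t < n) (j : Fin (n - t)) :
    Tᶜ.orderEmbOfFin hTc j ∈ exchangedSet T hT hTc htn q ↔ j = lastOutside htn := by
  have hj : Tᶜ.orderEmbOfFin hTc j ∉ T := Finset.mem_compl.mp (Finset.orderEmbOfFin_mem _ _ _)
  simp [exchangedSet, hj, (Tᶜ.orderEmbOfFin hTc).injective.eq_iff]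

theorem card_exchangedSet (htn : t < n) : (exchangedSet T hT hTc htn q).card = t := by
  have hb : Tᶜ.orderEmbOfFin hTc (lastOutside htn) ∉ T.erase (T.orderEmbOfFin hT q) := fun h =>
    Finset.mem_compl.mp (Finset.orderEmbOfFin_mem _ _ _) (Finset.mem_of_mem_erase h)
  rw [exchangedSet, Finset.card_insert_of_notMem hb,
    Finset.card_erase_of_mem (Finset.orderEmbOfFin_mem _ _ _), hT]
  have := q.pos
  omega

theorem exchangedString_orderEmbOfFin (htn : t < n) (w z : Fin t → Fin Q) (j : Fin t) :
    exchangedString T hT hTc hkt htn q w z (T.orderEmbOfFin hT j)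
      = update w q (z (lastDigit q.pos)) j := by
  rw [exchangedString, mergeOn_restrict]
  by_cases hj : j = q
  · subst hj
    simp [orderEmbOfFin_mem_exchangedSet, colsToQudits]
  · simp [orderEmbOfFin_mem_exchangedSet, hj, rowsToQudits,
      Finset.orderIsoOfFin_symm_orderEmbOfFin]

theorem append_exchangedString (htn : t < n) (w z : Fin t → Fin Q) (i : Fin (k + (n - t))) :
    Fin.append (colsToRef hkt z)
        (fun j => exchangedString T hT hTc hkt htn q w z (Tᶜ.orderEmbOfFin hTc j)) i
      = update z (lastDigit q.pos) (w q) (Fin.cast hkt i) := by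
  refine Fin.addCases (fun j => ?_) (fun j => ?_) i
  · have : Fin.cast hkt (Fin.castAdd (n - t) j) ≠ lastDigit q.pos := by
      simp [Fin.ext_iff, lastDigit]; omega
    simp [colsToRef, this]
  · have hlast : Fin.cast hkt (Fin.natAdd k j) = lastDigit q.pos ↔ j = lastOutside htn := by
      simp [Fin.ext_iff, lastDigit, lastOutside]; omega
    have hj : Tᶜ.orderEmbOfFin hTc j ∉ T := Finset.mem_compl.mp (Finset.orderEmbOfFin_mem _ _ _)
    rw [Fin.append_right, exchangedString, mergeOn_restrict]
    by_cases hjl : j = lastOutside htn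
    · subst hjl
      simp [compl_orderEmbOfFin_mem_exchangedSet, rowsToQudits, hj, hlast.mpr rfl]
    · simp [compl_orderEmbOfFin_mem_exchangedSet, hjl, colsToQudits,
        Finset.orderIsoOfFin_symm_orderEmbOfFin, mt hlast.mp hjl]

theorem exchangeQudits_mul_conjTranspose_eq_one (htn : t < n) (hQ : Q ≠ 0)
    (Φ : (Fin k → Fin Q) → (Fin n → Fin Q) → ℂ) (huniform : TUniform t Φ)
    (U : Matrix (Fin t → Fin Q) (Fin t → Fin Q) ℂ)
    (hUstd : ∀ (s : Fin k → Fin Q) (w : Fin n → Fin Q),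
      Φ s w = (Real.sqrt ((Q : ℝ) ^ t) : ℂ)⁻¹ *
        U (fun i => w (T.orderEmbOfFin hT i))
          (fun i => Fin.append s (fun j => w (Tᶜ.orderEmbOfFin hTc j)) (Fin.cast hkt.symm i))) :
    exchangeQudits U q (lastDigit q.pos) * (exchangeQudits U q (lastDigit q.pos))ᴴ = 1 := by
  set A := exchangedSet T hT hTc htn q
  have hA : A.card = t := card_exchangedSet T hT hTc q htn
  set c := lastDigit q.pos
  set x := exchangedString T hT hTc hkt htn q (Q := Q)
  have hstd : ∀ w z, (fun j => x w z (T.orderEmbOfFin hT j),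
      fun i => Fin.append (colsToRef hkt z) (fun j => x w z (Tᶜ.orderEmbOfFin hTc j))
        (Fin.cast hkt.symm i)) = (update w q (z c), update z c (w q)) := fun w z =>
    Prod.ext (funext (exchangedString_orderEmbOfFin T hT hTc hkt q htn w z))
      (funext fun i => by
        simpa using append_exchangedString T hT hTc hkt q htn w z (Fin.cast hkt.symm i))
  have hQt : (0 : ℝ) < (Q : ℝ) ^ t := pow_pos (by exact_mod_cast Nat.pos_of_ne_zero hQ) t
  refine mul_conjTranspose_eq_one_of_rdm Φ A (Real.sqrt ((Q : ℝ) ^ t))⁻¹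
    (inv_ne_zero (Real.sqrt_ne_zero'.mpr hQt)) ?_ _ (fun w i => rowsToQudits T hT q w i) ?_
    (fun z => (colsToRef hkt z, fun i => colsToQudits T hTc hkt c z i)) ?_ (fun w z => ?_)
  · rw [huniform A hA, Complex.ofReal_inv, inv_pow,
      ← Complex.ofReal_pow, Real.sq_sqrt hQt.le]
    push_cast; rfl
  · intro w w' h
    have hx : x w w = x w' w := congrArg (fun u => mergeOn A u _) h
    have := hstd w w
    rw [hx, hstd, Prod.mk.injEq] at this
    exact (eq_of_update_eq_update this.1 (by simpa using congrFun this.2 c)).symm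
  · refine (Fintype.bijective_iff_injective_and_card _).mpr ⟨fun z z' h => ?_, ?_⟩
    · rw [Prod.mk.injEq] at h
      have hx : x z z = x z z' := congrArg (fun v => mergeOn A _ v) h.2
      have := hstd z z
      rw [hx, h.1, hstd, Prod.mk.injEq] at this
      exact (eq_of_update_eq_update this.2 (by simpa using congrFun this.1 q)).symm
    · simp only [Fintype.card_prod, Fintype.card_fun, Fintype.card_fin,
        Fintype.card_subtype_compl, Fintype.card_coe, hA]
      rw [← pow_add, hkt]
  · rw [hUstd, Complex.ofReal_inv]
    exact congrArg (fun p => _ * U p.1 p.2) (hstd w z)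

end StandardForm

/-- Lemma 2.6.  For a `t`-uniform state with `T`-standard-form unitary `U`,
the vectors `ω_{s'}` are orthonormal, and for every position `p` of the `t+1` qudits and every
single-qudit operator `γ` there is a scalar `c` (independent of `s', s''`) with
`⟨ω_{s'}, Γ ω_{s''}⟩ = c · δ_{s',s''}`; hence their span is a `[[t+1, t-1]]_Q` quantum MDS code
of distance 2. -/
theorem stmt_2 (Q t n : ℕ) (hQ : 2 ≤ Q) (ht : 1 < t) (htn : t < n) (hn : n ≤ 2 * t)
    (k : ℕ) (hk : k = 2 * t - n)
    (Φ : (Fin k → Fin Q) → (Fin n → Fin Q) → ℂ)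
    (huniform : TUniform t Φ)
    (T : Finset (Fin n)) (hT : T.card = t) (hTc : Tᶜ.card = n - t)
    (U : Matrix (Fin t → Fin Q) (Fin t → Fin Q) ℂ)
    (hUuni : U ∈ Matrix.unitaryGroup (Fin t → Fin Q) ℂ)
    (hUstd : ∀ (s : Fin k → Fin Q) (w : Fin n → Fin Q),
      Φ s w = (Real.sqrt ((Q : ℝ) ^ t) : ℂ)⁻¹ *
        U (fun i => w (T.orderEmbOfFin hT i))
          (fun i => Fin.append s (fun j => w (Tᶜ.orderEmbOfFin hTc j))
            (Fin.cast (by omega : t = k + (n - t)) i))) :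
    -- orthonormality of the ω's
    (∀ s' s'' : Fin (t - 1) → Fin Q,
      (∑ v : Fin (t + 1) → Fin Q,
          (starRingEnd ℂ) (omegaVec ht U s' v) * omegaVec ht U s'' v)
        = if s' = s'' then 1 else 0) ∧
    -- the Knill–Laflamme (distance-2) condition for every single-qudit operator
    (∀ (p : Fin (t + 1)) (γ : Matrix (Fin Q) (Fin Q) ℂ), ∃ c : ℂ,
      ∀ s' s'' : Fin (t - 1) → Fin Q,
        (∑ v : Fin (t + 1) → Fin Q,
            (starRingEnd ℂ) (omegaVec ht U s' v) *
              (∑ m : Fin Q, γ (v p) m * omegaVec ht U s'' (Function.update v p m)))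
          = if s' = s'' then c else 0) := by
  have hkt : k + (n - t) = t := by omega
  have hUex : ∀ q, (exchangeQudits U q (lastDigit q.pos))ᴴ *
      exchangeQudits U q (lastDigit q.pos) = 1 := fun q => mul_eq_one_comm.mp
    (exchangeQudits_mul_conjTranspose_eq_one T hT hTc hkt q htn (by omega) Φ huniform U hUstd)
  have hkl := omegaVec_knillLaflamme ht U (Matrix.mem_unitaryGroup_iff'.mp hUuni) hUex
  refine ⟨fun s' s'' => ?_, fun p γ => ⟨(Q : ℂ)⁻¹ * γ.trace, hkl p γ⟩⟩
  have hQ0 : (Q : ℂ) ≠ 0 := by exact_mod_cast (by omega : Q ≠ 0)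
  simpa [Matrix.one_apply, hQ0] using hkl (Fin.last t) 1 s' s''
end
end

section
/- Let Q ≥ 2 and integers t, n with 1 < t < n ≤ 2t, k := 2t − n. Let U be any unitary on ℂ^{Q^k} ⊗ (ℂ^Q)^{⊗(n−t)} (a space of dimension Q^t), let G_1,…,G_{n−t−1} be any unitaries on ℂ^Q, let ε ∈ ℂ^Q be a unit vector, and let Ū denote the entrywise complex conjugate of U (also unitary). Define the vector ψ_out on registers W_T (dimension Q^t), Ŵ (dimension Q) and W_T' (dimension Q^t) by ψ_out := Q^{−t/2} Σ_{s ∈ {0,…,Q−1}^k} Σ_{r ∈ {0,…,Q−1}^{n−t}} U(e_s ⊗ e_{r_1} ⊗ ⋯ ⊗ e_{r_{n−t}}) ⊗ e_{r_{n−t}} ⊗ Ū(e_s ⊗ G_1^† e_{r_1} ⊗ ⋯ ⊗ G_{n−t−1}^† e_{r_{n−t−1}} ⊗ ε). Then ψ_out is a unit vector and the reduced density matrix of ψ_out on the register Ŵ equals Q^{−1}·I; in particular the Schmidt rank of ψ_out across the bipartition (Ŵ | W_T and W_T') equals Q (Lemma 3.6, Schmidt rank of the replacement node after the erasure-correction LOCC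 protocol). -/
open scoped BigOperators

noncomputable section

/-- The state `ψ_out` of Lemma 3.6, in amplitude form.  Registers: `W_T` (index
`a : (Fin k → Fin Q) × (Fin (n-t) → Fin Q)`, dimension `Q^t`), the replacement qudit `Ŵ`
(index `x : Fin Q`) and `W_T'` (index `b`, dimension `Q^t`).
`ψ_out = Q^{-t/2} Σ_{s,r} U(e_s ⊗ e_{r_1} ⊗ ⋯ ⊗ e_{r_{n-t}}) ⊗ e_{r_{n-t}} ⊗
Ū(e_s ⊗ G_1† e_{r_1} ⊗ ⋯ ⊗ G_{n-t-1}† e_{r_{n-t-1}} ⊗ ε)`, where `Ū` is the entrywise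
conjugate of `U` and `lst` is the last coordinate of `Fin (n-t)`. -/
def psiOut (Q n t k : ℕ)
    (U : Matrix ((Fin k → Fin Q) × (Fin (n - t) → Fin Q))
                ((Fin k → Fin Q) × (Fin (n - t) → Fin Q)) ℂ)
    (G : Fin (n - t - 1) → Matrix (Fin Q) (Fin Q) ℂ)
    (ε : Fin Q → ℂ) (lst : Fin (n - t)) :
    ((Fin k → Fin Q) × (Fin (n - t) → Fin Q)) → Fin Q →
      ((Fin k → Fin Q) × (Fin (n - t) → Fin Q)) → ℂ :=
  fun a x b =>
    (Real.sqrt ((Q : ℝ) ^ t) : ℂ)⁻¹ *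
      ∑ s : Fin k → Fin Q, ∑ r : Fin (n - t) → Fin Q, ∑ y : Fin (n - t) → Fin Q,
        U a (s, r) * (if r lst = x then 1 else 0) *
          (starRingEnd ℂ) (U b (s, y)) *
          ∏ i : Fin (n - t),
            if h : (i : ℕ) < n - t - 1 then (starRingEnd ℂ) ((G ⟨i, h⟩) (r i) (y i))
            else ε (y i)

namespace Stmt9Aux

open Matrix

abbrev Idx (Q n t k : ℕ) := (Fin k → Fin Q) × (Fin (n - t) → Fin Q)

def Dm (Q n t k : ℕ) (lst : Fin (n - t)) (x : Fin Q) :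
    Matrix (Idx Q n t k) (Idx Q n t k) ℂ :=
  Matrix.diagonal fun α => if α.2 lst = x then 1 else 0

def Km (Q n t k : ℕ) (G : Fin (n - t - 1) → Matrix (Fin Q) (Fin Q) ℂ)
    (ε : Fin Q → ℂ) : Matrix (Idx Q n t k) (Idx Q n t k) ℂ :=
  Matrix.of fun α β => (if α.1 = β.1 then (1 : ℂ) else 0) *
    ∏ i : Fin (n - t), if h : (i : ℕ) < n - t - 1
      then (starRingEnd ℂ) ((G ⟨i, h⟩) (α.2 i) (β.2 i)) else ε (β.2 i)

lemma KK_diag {Q n t k : ℕ}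
    (G : Fin (n - t - 1) → Matrix (Fin Q) (Fin Q) ℂ)
    (hG : ∀ i, G i ∈ Matrix.unitaryGroup (Fin Q) ℂ)
    (ε : Fin Q → ℂ) (hε : ∑ m : Fin Q, ε m * (starRingEnd ℂ) (ε m) = 1)
    (α : Idx Q n t k) :
    (Km Q n t k G ε * (Km Q n t k G ε)ᴴ) α α = 1 := by
  rw [Matrix.mul_apply]
  have hterm : ∀ β, Km Q n t k G ε α β * (Km Q n t k G ε)ᴴ β α
      = (if α.1 = β.1 then (1:ℂ) else 0) *
        ∏ i : Fin (n - t),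
          ((if h : (i : ℕ) < n - t - 1
            then (starRingEnd ℂ) ((G ⟨i, h⟩) (α.2 i) (β.2 i)) else ε (β.2 i)) *
          (starRingEnd ℂ) (if h : (i : ℕ) < n - t - 1
            then (starRingEnd ℂ) ((G ⟨i, h⟩) (α.2 i) (β.2 i)) else ε (β.2 i))) := by
    intro β
    have hct : (Km Q n t k G ε)ᴴ β α = (starRingEnd ℂ) (Km Q n t k G ε α β) := rfl
    rw [hct]
    simp only [Km, Matrix.of_apply, _root_.map_mul, map_prod,
      apply_ite (starRingEnd ℂ), _root_.map_one, map_zero]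
    rw [mul_mul_mul_comm, ← Finset.prod_mul_distrib]
    congr 1
    split <;> simp
  rw [Finset.sum_congr rfl fun β _ => hterm β]
  rw [Fintype.sum_prod_type]
  have hone : ∀ i : Fin (n - t),
      (∑ m : Fin Q,
        (if h : (i : ℕ) < n - t - 1
          then (starRingEnd ℂ) ((G ⟨i, h⟩) (α.2 i) m) else ε m) *
        (starRingEnd ℂ) (if h : (i : ℕ) < n - t - 1
          then (starRingEnd ℂ) ((G ⟨i, h⟩) (α.2 i) m) else ε m)) = 1 := by
    intro i
    by_cases h : (i : ℕ) < n - t - 1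
    · simp only [dif_pos h]
      have hGG : (G ⟨i, h⟩) * (G ⟨i, h⟩)ᴴ = 1 := by
        have := (Matrix.mem_unitaryGroup_iff).mp (hG ⟨i, h⟩)
        simpa [Matrix.star_eq_conjTranspose] using this
      have h1 := congrArg (fun M => M (α.2 i) (α.2 i)) hGG
      simp only [Matrix.mul_apply, Matrix.conjTranspose_apply, Matrix.one_apply_eq,
        Complex.star_def] at h1
      simpa [Complex.conj_conj, mul_comm] using h1
    · simp only [dif_neg h]
      exact hε
  have hy : ∀ s' : Fin k → Fin Q,
      (∑ y : Fin (n - t) → Fin Q,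
        (if α.1 = s' then (1:ℂ) else 0) *
        ∏ i : Fin (n - t),
          ((if h : (i : ℕ) < n - t - 1
            then (starRingEnd ℂ) ((G ⟨i, h⟩) (α.2 i) (y i)) else ε (y i)) *
          (starRingEnd ℂ) (if h : (i : ℕ) < n - t - 1
            then (starRingEnd ℂ) ((G ⟨i, h⟩) (α.2 i) (y i)) else ε (y i))))
      = if α.1 = s' then (1:ℂ) else 0 := by
    intro s'
    have hsum1 : (∑ y : Fin (n - t) → Fin Q,
        ∏ i : Fin (n - t),
          ((if h : (i : ℕ) < n - t - 1
            then (starRingEnd ℂ) ((G ⟨i, h⟩) (α.2 i) (y i)) else ε (y i)) *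
          (starRingEnd ℂ) (if h : (i : ℕ) < n - t - 1
            then (starRingEnd ℂ) ((G ⟨i, h⟩) (α.2 i) (y i)) else ε (y i)))) = 1 := by
      have h2 := Finset.prod_univ_sum (fun _ : Fin (n - t) => (Finset.univ : Finset (Fin Q)))
        (fun (i : Fin (n - t)) (m : Fin Q) =>
          (if h : (i : ℕ) < n - t - 1
            then (starRingEnd ℂ) ((G ⟨i, h⟩) (α.2 i) m) else ε m) *
          (starRingEnd ℂ) (if h : (i : ℕ) < n - t - 1
            then (starRingEnd ℂ) ((G ⟨i, h⟩) (α.2 i) m) else ε m))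
      rw [Fintype.piFinset_univ] at h2
      have h3 : (∏ i : Fin (n - t), ∑ m : Fin Q,
          (if h : (i : ℕ) < n - t - 1
            then (starRingEnd ℂ) ((G ⟨i, h⟩) (α.2 i) m) else ε m) *
          (starRingEnd ℂ) (if h : (i : ℕ) < n - t - 1
            then (starRingEnd ℂ) ((G ⟨i, h⟩) (α.2 i) m) else ε m)) = 1 :=
        Finset.prod_eq_one fun i _ => hone i
      exact h2.symm.trans h3
    by_cases hss : α.1 = s'
    · simp only [if_pos hss, one_mul]
      exact hsum1
    · simp [hss]
  rw [Finset.sum_congr rfl fun s' _ => hy s']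
  simp

lemma psi_eq {Q n t k : ℕ}
    (U : Matrix (Idx Q n t k) (Idx Q n t k) ℂ)
    (G : Fin (n - t - 1) → Matrix (Fin Q) (Fin Q) ℂ)
    (ε : Fin Q → ℂ) (lst : Fin (n - t)) (x : Fin Q) (a b : Idx Q n t k) :
    psiOut Q n t k U G ε lst a x b =
      ((Real.sqrt ((Q : ℝ) ^ t) : ℂ))⁻¹ *
        ((U * Dm Q n t k lst x) * (Km Q n t k G ε * Uᴴ)) a b := by
  rw [psiOut]
  congr 1
  rw [Matrix.mul_apply, Fintype.sum_prod_type]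
  refine Finset.sum_congr rfl fun s _ => Finset.sum_congr rfl fun r _ => ?_
  rw [show (U * Dm Q n t k lst x) a (s, r) = U a (s, r) * (if r lst = x then 1 else 0) from
    Matrix.mul_diagonal _ _ _ _]
  rw [Matrix.mul_apply, Fintype.sum_prod_type]
  simp only [Km, Matrix.of_apply, Matrix.conjTranspose_apply, ite_mul, one_mul, zero_mul]
  rw [Finset.sum_comm]
  simp only [Finset.sum_ite_eq, Finset.mem_univ, if_true]
  rw [Finset.mul_sum]
  refine Finset.sum_congr rfl fun y _ => ?_
  have : star (U b (s, y)) = (starRingEnd ℂ) (U b (s, y)) := rfl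
  rw [this]
  ring

lemma count_lem {Q N : ℕ} (lst : Fin N) (x : Fin Q) :
    (∑ r : Fin N → Fin Q, if r lst = x then (1:ℂ) else 0) = (Q : ℂ) ^ (N - 1) := by
  classical
  rw [← Equiv.sum_comp (Equiv.funSplitAt lst (Fin Q)).symm
    (fun r => if r lst = x then (1:ℂ) else 0)]
  have hev : ∀ p : Fin Q × ({j : Fin N // j ≠ lst} → Fin Q),
      ((Equiv.funSplitAt lst (Fin Q)).symm p) lst = p.1 := by
    intro p
    simp [Equiv.funSplitAt, Equiv.piSplitAt]
  have hcard : Fintype.card {j : Fin N // j ≠ lst} = N - 1 := by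
    have h := Fintype.card_subtype_compl (fun j : Fin N => j = lst)
    simpa [Fintype.card_subtype_eq] using h
  calc (∑ p : Fin Q × ({j : Fin N // j ≠ lst} → Fin Q),
          if ((Equiv.funSplitAt lst (Fin Q)).symm p) lst = x then (1:ℂ) else 0)
      = ∑ p : Fin Q × ({j : Fin N // j ≠ lst} → Fin Q), if p.1 = x then (1:ℂ) else 0 := by
        refine Finset.sum_congr rfl fun p _ => ?_
        rw [hev p]
    _ = ∑ v : Fin Q, ∑ g : {j : Fin N // j ≠ lst} → Fin Q, if v = x then (1:ℂ) else 0 := by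
        rw [Fintype.sum_prod_type]
    _ = (Q : ℂ) ^ (N - 1) := by
        simp [Finset.sum_ite_eq, Fintype.card_fun, hcard]

open scoped ComplexOrder in
lemma rank_self_mul_conjTranspose' {m n : Type*} [Fintype m] [Fintype n] (A : Matrix m n ℂ) :
    (A * Aᴴ).rank = A.rank := Matrix.rank_self_mul_conjTranspose A

end Stmt9Aux

open Matrix Stmt9Aux in
/-- Lemma 3.6, replacement-node part.  For any unitaries `U`, `G_i` and any
unit vector `ε`, the state `ψ_out` is a unit vector whose reduced density matrix on `Ŵ`
equals `Q⁻¹ · I`; in particular the Schmidt rank of `ψ_out` across `(Ŵ | W_T, W_T')`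
equals `Q`. -/
theorem stmt_9 (Q t n : ℕ) (hQ : 2 ≤ Q) (ht : 1 < t) (htn : t < n) (hn : n ≤ 2 * t)
    (k : ℕ) (hk : k = 2 * t - n)
    (U : Matrix ((Fin k → Fin Q) × (Fin (n - t) → Fin Q))
                ((Fin k → Fin Q) × (Fin (n - t) → Fin Q)) ℂ)
    (hU : U ∈ Matrix.unitaryGroup ((Fin k → Fin Q) × (Fin (n - t) → Fin Q)) ℂ)
    (G : Fin (n - t - 1) → Matrix (Fin Q) (Fin Q) ℂ)
    (hG : ∀ i, G i ∈ Matrix.unitaryGroup (Fin Q) ℂ)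
    (ε : Fin Q → ℂ) (hε : ∑ m : Fin Q, ε m * (starRingEnd ℂ) (ε m) = 1) :
    -- ψ_out is a unit vector
    (∑ a : (Fin k → Fin Q) × (Fin (n - t) → Fin Q), ∑ x : Fin Q,
        ∑ b : (Fin k → Fin Q) × (Fin (n - t) → Fin Q),
        psiOut Q n t k U G ε ⟨n - t - 1, by omega⟩ a x b *
          (starRingEnd ℂ) (psiOut Q n t k U G ε ⟨n - t - 1, by omega⟩ a x b) = 1) ∧
    -- the reduced density matrix on Ŵ is maximally mixed
    (∀ x x' : Fin Q,
      (∑ a : (Fin k → Fin Q) × (Fin (n - t) → Fin Q),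
          ∑ b : (Fin k → Fin Q) × (Fin (n - t) → Fin Q),
          psiOut Q n t k U G ε ⟨n - t - 1, by omega⟩ a x b *
            (starRingEnd ℂ) (psiOut Q n t k U G ε ⟨n - t - 1, by omega⟩ a x' b))
        = if x = x' then ((Q : ℂ))⁻¹ else 0) ∧
    -- the Schmidt rank across (Ŵ | W_T, W_T') equals Q
    (Matrix.of fun (x : Fin Q)
        (ab : ((Fin k → Fin Q) × (Fin (n - t) → Fin Q)) ×
              ((Fin k → Fin Q) × (Fin (n - t) → Fin Q))) =>
      psiOut Q n t k U G ε ⟨n - t - 1, by omega⟩ ab.1 x ab.2).rank = Q := by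
  classical
  set lst : Fin (n - t) := ⟨n - t - 1, by omega⟩ with hlst
  have hQ0 : (Q : ℂ) ≠ 0 := by
    simp only [ne_eq, Nat.cast_eq_zero]; omega
  set c : ℂ := ((Real.sqrt ((Q : ℝ) ^ t) : ℂ))⁻¹ with hc
  set D : Fin Q → Matrix (Idx Q n t k) (Idx Q n t k) ℂ := Dm Q n t k lst with hD
  set K : Matrix (Idx Q n t k) (Idx Q n t k) ℂ := Km Q n t k G ε with hK
  -- unitarity
  have hUU : Uᴴ * U = 1 := by
    have := (Matrix.mem_unitaryGroup_iff').mp hU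
    simpa [Matrix.star_eq_conjTranspose] using this
  have hcancel : ∀ W : Matrix (Idx Q n t k) (Idx Q n t k) ℂ, Uᴴ * (U * W) = W := by
    intro W; rw [← Matrix.mul_assoc, hUU, one_mul]
  have hDH : ∀ x : Fin Q, (D x)ᴴ = D x := by
    intro x
    rw [hD]
    ext α β
    simp only [Dm, Matrix.conjTranspose_apply, Matrix.diagonal_apply]
    by_cases hab : α = β
    · subst hab
      simp only [if_pos rfl]
      split <;> simp
    · simp [hab, Ne.symm hab]
  -- conjugate of c
  have hcc : c * (starRingEnd ℂ) c = (((Q : ℂ)) ^ t)⁻¹ := by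
    have hs : Real.sqrt ((Q:ℝ)^t) * Real.sqrt ((Q:ℝ)^t) = (Q:ℝ)^t :=
      Real.mul_self_sqrt (by positivity)
    rw [hc, map_inv₀, Complex.conj_ofReal, ← mul_inv, ← Complex.ofReal_mul, hs]
    push_cast
    ring
  -- the matrix algebra identity
  have hM : ∀ x x' : Fin Q,
      ((U * D x) * (K * Uᴴ)) * ((U * D x') * (K * Uᴴ))ᴴ
        = (U * ((D x * (K * Kᴴ)) * D x')) * Uᴴ := by
    intro x x'
    rw [Matrix.conjTranspose_mul, Matrix.conjTranspose_mul, Matrix.conjTranspose_mul,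
      Matrix.conjTranspose_conjTranspose, hDH x']
    simp only [Matrix.mul_assoc]
    rw [hcancel]
  have htrc : ∀ W : Matrix (Idx Q n t k) (Idx Q n t k) ℂ,
      Matrix.trace ((U * W) * Uᴴ) = Matrix.trace W := by
    intro W
    rw [Matrix.trace_mul_comm, ← Matrix.mul_assoc, hUU, one_mul]
  -- trace of the sandwiched matrix
  have hcount : ∀ x x' : Fin Q,
      Matrix.trace ((D x * (K * Kᴴ)) * D x')
        = if x = x' then ((Q : ℂ)) ^ (t - 1) else 0 := by
    intro x x'
    have hent : ∀ α : Idx Q n t k, ((D x * (K * Kᴴ)) * D x') α α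
        = (if α.2 lst = x then (1:ℂ) else 0) * (if α.2 lst = x' then (1:ℂ) else 0) := by
      intro α
      rw [hD]
      rw [show ((Dm Q n t k lst x * (K * Kᴴ)) * Dm Q n t k lst x') α α
          = (Dm Q n t k lst x * (K * Kᴴ)) α α * (if α.2 lst = x' then (1:ℂ) else 0) from
        Matrix.mul_diagonal _ _ _ _]
      rw [show (Dm Q n t k lst x * (K * Kᴴ)) α α
          = (if α.2 lst = x then (1:ℂ) else 0) * (K * Kᴴ) α α from
        Matrix.diagonal_mul _ _ _ _]
      rw [hK, Stmt9Aux.KK_diag G hG ε hε α]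
      ring
    rw [Matrix.trace]
    simp only [Matrix.diag_apply]
    rw [Finset.sum_congr rfl fun α _ => hent α]
    by_cases hxx : x = x'
    · subst hxx
      have hsq : ∀ α : Idx Q n t k,
          (if α.2 lst = x then (1:ℂ) else 0) * (if α.2 lst = x then (1:ℂ) else 0)
            = if α.2 lst = x then (1:ℂ) else 0 := by
        intro α; split <;> simp
      rw [Finset.sum_congr rfl fun α _ => hsq α, Fintype.sum_prod_type]
      simp only [Stmt9Aux.count_lem lst x]
      rw [Finset.sum_const, Finset.card_univ, Fintype.card_fun, Fintype.card_fin,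
        Fintype.card_fin, nsmul_eq_mul, if_true]
      push_cast
      rw [← pow_add]
      congr 1
      omega
    · rw [if_neg hxx]
      refine Finset.sum_eq_zero fun α _ => ?_
      by_cases h1 : α.2 lst = x
      · have h2 : ¬ (α.2 lst = x') := by
          rw [h1]; exact hxx
        simp [h1, h2, hxx]
      · simp [h1]
  -- the key reduced-density-matrix computation
  have key : ∀ x x' : Fin Q,
      (∑ a : Idx Q n t k, ∑ b : Idx Q n t k,
        psiOut Q n t k U G ε lst a x b *
          (starRingEnd ℂ) (psiOut Q n t k U G ε lst a x' b))
        = if x = x' then ((Q : ℂ))⁻¹ else 0 := by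
    intro x x'
    have e1 : ∀ a b : Idx Q n t k,
        psiOut Q n t k U G ε lst a x b * (starRingEnd ℂ) (psiOut Q n t k U G ε lst a x' b)
          = (c * (starRingEnd ℂ) c) *
            (((U * D x) * (K * Uᴴ)) a b *
              (starRingEnd ℂ) (((U * D x') * (K * Uᴴ)) a b)) := by
      intro a b
      rw [Stmt9Aux.psi_eq U G ε lst x a b, Stmt9Aux.psi_eq U G ε lst x' a b,
        _root_.map_mul]
      rw [hc, hD, hK]
      ring
    rw [Finset.sum_congr rfl fun a _ => Finset.sum_congr rfl fun b _ => e1 a b]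
    simp_rw [← Finset.mul_sum]
    have e2 : (∑ a : Idx Q n t k, ∑ b : Idx Q n t k,
        ((U * D x) * (K * Uᴴ)) a b *
          (starRingEnd ℂ) (((U * D x') * (K * Uᴴ)) a b))
        = Matrix.trace (((U * D x) * (K * Uᴴ)) * (((U * D x') * (K * Uᴴ)))ᴴ) := by
      rw [Matrix.trace]
      simp only [Matrix.diag_apply]
      refine (Finset.sum_congr rfl fun a _ => ?_).symm
      rw [Matrix.mul_apply]
      refine Finset.sum_congr rfl fun b _ => ?_
      rw [Matrix.conjTranspose_apply]
      rfl
    rw [e2, hM x x', htrc, hcount x x', hcc]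
    by_cases hxx : x = x'
    · rw [if_pos hxx, if_pos hxx]
      have hQt : ((Q:ℂ))^t = ((Q:ℂ))^(t-1) * (Q:ℂ) := by
        rw [← pow_succ]
        congr 1
        omega
      rw [hQt, mul_inv]
      have hp : ((Q:ℂ))^(t-1) ≠ 0 := pow_ne_zero _ hQ0
      field_simp
    · rw [if_neg hxx, if_neg hxx, mul_zero]
  refine ⟨?_, fun x x' => key x x', ?_⟩
  · rw [Finset.sum_comm]
    calc (∑ x : Fin Q, ∑ a : Idx Q n t k, ∑ b : Idx Q n t k,
            psiOut Q n t k U G ε lst a x b *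
              (starRingEnd ℂ) (psiOut Q n t k U G ε lst a x b))
        = ∑ x : Fin Q, ((Q : ℂ))⁻¹ := by
          refine Finset.sum_congr rfl fun x _ => ?_
          rw [key x x, if_pos rfl]
      _ = 1 := by
          rw [Finset.sum_const, Finset.card_univ, Fintype.card_fin, nsmul_eq_mul]
          exact mul_inv_cancel₀ hQ0
  · set M0 : Matrix (Fin Q) (Idx Q n t k × Idx Q n t k) ℂ :=
      Matrix.of (fun (x : Fin Q) (ab : Idx Q n t k × Idx Q n t k) =>
        psiOut Q n t k U G ε lst ab.1 x ab.2) with hM0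
    have hMM0 : M0 * M0ᴴ = ((Q : ℂ))⁻¹ • (1 : Matrix (Fin Q) (Fin Q) ℂ) := by
      ext x x'
      rw [Matrix.mul_apply]
      have : ∀ ab : Idx Q n t k × Idx Q n t k,
          M0 x ab * M0ᴴ ab x'
            = psiOut Q n t k U G ε lst ab.1 x ab.2 *
              (starRingEnd ℂ) (psiOut Q n t k U G ε lst ab.1 x' ab.2) := by
        intro ab
        rw [Matrix.conjTranspose_apply]
        rfl
      rw [Finset.sum_congr rfl fun ab _ => this ab, Fintype.sum_prod_type, key x x']
      rw [Matrix.smul_apply, Matrix.one_apply]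
      split <;> simp
    have hrank := Stmt9Aux.rank_self_mul_conjTranspose' M0
    rw [hMM0] at hrank
    rw [← hrank]
    have hdiag : ((Q : ℂ))⁻¹ • (1 : Matrix (Fin Q) (Fin Q) ℂ)
        = Matrix.diagonal (fun _ : Fin Q => ((Q : ℂ))⁻¹) := by
      ext i j
      rw [Matrix.smul_apply, Matrix.one_apply, Matrix.diagonal_apply]
      split <;> simp
    rw [hdiag, Matrix.rank_diagonal]
    have hne : ((Q : ℂ))⁻¹ ≠ 0 := inv_ne_zero hQ0
    rw [Fintype.card_congr (Equiv.subtypeUnivEquiv fun i : Fin Q => hne)]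
    exact Fintype.card_fin Q
end
end
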